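/- arXiv:1710.03358 — 5 statements merged into one kernel-verified Lean document; each statement's English description precedes it below -/
import Mathlib

section
/- Let P be a finite set of points in Euclidean space ℝ^n, let C be a finite set of centers in ℝ^n, and let μ : C → ℕ be target fiber sizes with ∑_{x∈C} μ_x = |P|. Suppose f : P → C is an assignment with fiber sizes μ (i.e., |f⁻¹(x)| = μ_x for every x ∈ C), and suppose there exist weights w : C → ℝ such that for every resident y ∈ P and every center x ∈ C, ‖y − f(y)‖² − w_{f(y)} ≤ ‖y − x‖² − w_x (i.e., f is consistent with the power diagram P(C,w)). Then f has minimum cost among all assignments with fiber sizes μ: for every g : P → C with |g⁻¹(x)| = μ_x for all x ∈ C, ∑_{y∈P} ‖y − f(y)‖² ≤ ∑_{y∈P} ‖y − g(y)‖². -/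
open Finset
open scoped Classical

/-- If an assignment `f` with fiber sizes `μ` is consistent with the power diagram of
`(C, w)` for some weights `w`, then `f` has minimum cost (sum of squared Euclidean
distances) among all assignments with fiber sizes `μ`. -/
theorem stmt_0 {n : ℕ} (P C : Finset (EuclideanSpace ℝ (Fin n)))
    (μ : EuclideanSpace ℝ (Fin n) → ℕ) (hμ : ∑ x ∈ C, μ x = P.card)
    (f : EuclideanSpace ℝ (Fin n) → EuclideanSpace ℝ (Fin n))
    (hfC : ∀ y ∈ P, f y ∈ C)
    (hf : ∀ x ∈ C, (P.filter fun y => f y = x).card = μ x)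
    (w : EuclideanSpace ℝ (Fin n) → ℝ)
    (hcons : ∀ y ∈ P, ∀ x ∈ C, ‖y - f y‖ ^ 2 - w (f y) ≤ ‖y - x‖ ^ 2 - w x) :
    ∀ g : EuclideanSpace ℝ (Fin n) → EuclideanSpace ℝ (Fin n),
      (∀ y ∈ P, g y ∈ C) →
      (∀ x ∈ C, (P.filter fun y => g y = x).card = μ x) →
      ∑ y ∈ P, ‖y - f y‖ ^ 2 ≤ ∑ y ∈ P, ‖y - g y‖ ^ 2 := by
  intro g hgC hg
  have key : ∀ (h : EuclideanSpace ℝ (Fin n) → EuclideanSpace ℝ (Fin n)),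
      (∀ y ∈ P, h y ∈ C) → (∀ x ∈ C, (P.filter fun y => h y = x).card = μ x) →
      ∑ y ∈ P, w (h y) = ∑ x ∈ C, (μ x : ℝ) * w x := by
    intro h hC hcard
    rw [← Finset.sum_fiberwise_of_maps_to hC (fun y => w (h y))]
    refine Finset.sum_congr rfl fun x hx => ?_
    rw [Finset.sum_congr rfl (fun y hy => by
      rw [(Finset.mem_filter.mp hy).2]), Finset.sum_const, hcard x hx,
      nsmul_eq_mul]
  have h1 : ∑ y ∈ P, (‖y - f y‖ ^ 2 - w (f y)) ≤ ∑ y ∈ P, (‖y - g y‖ ^ 2 - w (g y)) :=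
    Finset.sum_le_sum fun y hy => hcons y hy (g y) (hgC y hy)
  have h2 := key f hfC hf
  have h3 := key g hgC hg
  simp only [Finset.sum_sub_distrib, h2, h3] at h1
  linarith
end

section
/- Let P be a finite set of points in Euclidean space ℝ^n, let C be a finite set of centers in ℝ^n, and let μ : C → ℕ be target fiber sizes with ∑_{x∈C} μ_x = |P|, where at least one assignment with fiber sizes μ exists. If f : P → C has minimum cost ∑_{y∈P} ‖y − f(y)‖² among all assignments with fiber sizes μ, then there exist weights w : C → ℝ such that f is consistent with the power diagram P(C,w), i.e., for every y ∈ P and every x ∈ C, ‖y − f(y)‖² − w_{f(y)} ≤ ‖y − x‖² − w_x. -/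
open Finset
open scoped Classical

/-! Call a list `y₀ :: y₁ :: … :: yₖ` of residents a chain to the center `x` if `y₀` is moved to
`x`, `y₁` to the old center `f y₀` of `y₀`, and so on; then only the center `f yₖ` loses a
resident and only `x` gains one. Shifting along a closed chain (`f yₖ = x`) preserves all fiber
sizes, so by optimality of `f` closed chains have nonnegative cost. So the least cost of a chain with distinct centers ending at `x` is a
potential: appending one more resident `y` to a chain to `f y` gives a chain to `x`, and cutting
out the closed chain it may contain does not increase its cost. These potentials are the weights
of the power diagram. -/

namespace PowerDiagram

variable {α β : Type*}

section Chains

variable (f : β → α) (c : β → α → ℝ)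

def chainCost : α → List β → ℝ
  | _, [] => 0
  | x, y :: ys => c y x - c y (f y) + chainCost (f y) ys

def chainEnd : α → List β → α
  | x, [] => x
  | _, y :: ys => chainEnd (f y) ys

noncomputable def chainShift : α → List β → β → α
  | _, [] => f
  | x, y :: ys => Function.update (chainShift (f y) ys) y x

theorem chainCost_append (x : α) (as bs : List β) :
    chainCost f c x (as ++ bs) = chainCost f c x as + chainCost f c (chainEnd f x as) bs := by
  induction as generalizing x with
  | nil => simp [chainCost, chainEnd]
  | cons y as ih => simp only [List.cons_append, chainCost, chainEnd, ih]; ring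

theorem chainEnd_append_singleton (x : α) (as : List β) (z : β) :
    chainEnd f x (as ++ [z]) = f z := by
  induction as generalizing x with
  | nil => rfl
  | cons y as ih => exact ih (f y)

theorem chainShift_of_not_mem {x : α} {ys : List β} {y : β} (hy : y ∉ ys) :
    chainShift f x ys y = f y := by
  induction ys generalizing x with
  | nil => rfl
  | cons z ys ih =>
    rw [List.mem_cons, not_or] at hy
    rw [chainShift, Function.update_of_ne hy.1, ih hy.2]

end Chains

theorem sum_apply_update_add {M : Type*} [AddCommMonoid M] {P : Finset β} (φ : β → α → M)
    (g : β → α) {y : β} (hy : y ∈ P) (v : α) :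
    ∑ p ∈ P, φ p (Function.update g y v p) + φ y (g y) = ∑ p ∈ P, φ p (g p) + φ y v := by
  rw [← add_sum_erase P _ hy, ← add_sum_erase P _ hy, Function.update_self,
    sum_congr rfl fun p hp => by rw [Function.update_of_ne (ne_of_mem_erase hp)]]
  abel

variable {P : Finset β} {f : β → α} {c : β → α → ℝ}

theorem sum_chainShift (x : α) {ys : List β} (hnd : ys.Nodup) (hP : ∀ y ∈ ys, y ∈ P) :
    ∑ p ∈ P, c p (chainShift f x ys p) = ∑ p ∈ P, c p (f p) + chainCost f c x ys := by
  induction ys generalizing x with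
  | nil => simp [chainShift, chainCost]
  | cons y ys ih =>
    rw [List.nodup_cons] at hnd
    have hy := hP y List.mem_cons_self
    have hupd := sum_apply_update_add c (chainShift f (f y) ys) hy x
    rw [chainShift_of_not_mem f hnd.1, ih (f y) hnd.2 fun z hz => hP z (List.mem_cons_of_mem y hz)]
      at hupd
    rw [chainShift, chainCost]
    linarith

theorem card_filter_chainShift_add (x : α) {ys : List β} (hnd : ys.Nodup)
    (hP : ∀ y ∈ ys, y ∈ P) (a : α) :
    #{p ∈ P | chainShift f x ys p = a} + (if chainEnd f x ys = a then 1 else 0) =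
      #{p ∈ P | f p = a} + (if x = a then 1 else 0) := by
  induction ys generalizing x with
  | nil => rfl
  | cons y ys ih =>
    rw [List.nodup_cons] at hnd
    have hy := hP y List.mem_cons_self
    have hupd := sum_apply_update_add (fun _ b => if b = a then 1 else 0)
      (chainShift f (f y) ys) hy x
    have hys := ih (f y) hnd.2 fun z hz => hP z (List.mem_cons_of_mem y hz)
    simp only [← card_filter, chainShift_of_not_mem f hnd.1] at hupd
    rw [chainShift, chainEnd]
    omega

def IsFiberOptimal (P : Finset β) (f : β → α) (c : β → α → ℝ) : Prop :=
  ∀ g : β → α, (∀ a, #{y ∈ P | g y = a} = #{y ∈ P | f y = a}) →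
    ∑ y ∈ P, c y (f y) ≤ ∑ y ∈ P, c y (g y)

theorem IsFiberOptimal.chainCost_nonneg (hopt : IsFiberOptimal P f c) {x : α} {ys : List β}
    (hnd : ys.Nodup) (hP : ∀ y ∈ ys, y ∈ P) (hend : chainEnd f x ys = x) :
    0 ≤ chainCost f c x ys := by
  have := hopt (chainShift f x ys) fun a => by
    have hcard := card_filter_chainShift_add (f := f) x hnd hP a
    rw [hend] at hcard
    exact Nat.add_right_cancel hcard
  rw [sum_chainShift x hnd hP] at this
  linarith

theorem finite_setOf_nodup_subset (s : Finset β) :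
    {l : List β | l.Nodup ∧ ∀ y ∈ l, y ∈ s}.Finite := by
  refine (s.toList.sublists.flatMap List.permutations).finite_toSet.subset ?_
  rintro l ⟨hnd, hs⟩
  obtain ⟨t, htl, hts⟩ := hnd.subperm fun y hy => mem_toList.2 (hs y hy)
  exact List.mem_flatMap.2 ⟨t, List.mem_sublists.2 hts, List.mem_permutations.2 htl.symm⟩

def IsSimpleChain (P : Finset β) (f : β → α) (x : α) (ys : List β) : Prop :=
  (∀ y ∈ ys, y ∈ P) ∧ (x :: ys.map f).Nodup

theorem finite_setOf_isSimpleChain (P : Finset β) (f : β → α) (x : α) :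
    {ys | IsSimpleChain P f x ys}.Finite :=
  (finite_setOf_nodup_subset P).subset fun _ h => ⟨(List.nodup_cons.1 h.2).2.of_map f, h.1⟩

instance (P : Finset β) (f : β → α) (x : α) : Nonempty {ys // IsSimpleChain P f x ys} :=
  ⟨⟨[], by simp [IsSimpleChain]⟩⟩

noncomputable def potential (P : Finset β) (f : β → α) (c : β → α → ℝ) (x : α) : ℝ :=
  ⨅ ys : {ys // IsSimpleChain P f x ys}, chainCost f c x ys

theorem IsSimpleChain.potential_le {x : α} {ys : List β} (h : IsSimpleChain P f x ys) :
    potential P f c x ≤ chainCost f c x ys :=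
  have : Finite {ys // IsSimpleChain P f x ys} := (finite_setOf_isSimpleChain P f x).to_subtype
  ciInf_le (Set.finite_range _).bddBelow (⟨ys, h⟩ : {ys // IsSimpleChain P f x ys})

theorem IsFiberOptimal.potential_le_chainCost (hopt : IsFiberOptimal P f c) {x : α}
    {ys : List β} (hP : ∀ y ∈ ys, y ∈ P) (hnd : (ys.map f).Nodup) :
    potential P f c x ≤ chainCost f c x ys := by
  by_cases hx : x ∈ ys.map f
  · obtain ⟨z, hz, rfl⟩ := List.mem_map.1 hx
    obtain ⟨as, bs, rfl⟩ := List.append_of_mem hz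
    have hsplit : as ++ z :: bs = (as ++ [z]) ++ bs := by simp
    have hcycle : (as ++ [z]).Nodup :=
      (hnd.of_map f).sublist (by rw [hsplit]; exact List.sublist_append_left _ _)
    have hbs : IsSimpleChain P f (f z) bs :=
      ⟨fun y hy => hP y (List.mem_append_right _ (List.mem_cons_of_mem z hy)),
        hnd.sublist (by rw [List.map_append, List.map_cons]; exact List.sublist_append_right _ _)⟩
    rw [hsplit] at hP ⊢
    rw [chainCost_append, chainEnd_append_singleton]
    have hcyc : 0 ≤ chainCost f c (f z) (as ++ [z]) :=
      hopt.chainCost_nonneg hcycle (fun y hy => hP y (List.mem_append_left bs hy))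
        (chainEnd_append_singleton f _ as z)
    linarith [hbs.potential_le (c := c)]
  · exact IsSimpleChain.potential_le ⟨hP, List.nodup_cons.2 ⟨hx, hnd⟩⟩

theorem IsFiberOptimal.potential_le_add (hopt : IsFiberOptimal P f c) {y : β} (hy : y ∈ P)
    (x : α) : potential P f c x ≤ c y x - c y (f y) + potential P f c (f y) := by
  have : potential P f c x - (c y x - c y (f y)) ≤ potential P f c (f y) :=
    le_ciInf fun ⟨ys, hP, hnd⟩ => by
      have := hopt.potential_le_chainCost (x := x) (List.forall_mem_cons.2 ⟨hy, hP⟩)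
        (by rwa [List.map_cons])
      rw [chainCost] at this
      linarith
  linarith

theorem IsFiberOptimal.exists_weights (hopt : IsFiberOptimal P f c) :
    ∃ w : α → ℝ, ∀ y ∈ P, ∀ x, c y (f y) - w (f y) ≤ c y x - w x :=
  ⟨potential P f c, fun y hy x => by linarith [hopt.potential_le_add hy x]⟩

theorem mapsTo_of_card_filter_eq {C : Finset α} {g : β → α} (hfC : ∀ y ∈ P, f y ∈ C)
    (hg : ∀ a, #{y ∈ P | g y = a} = #{y ∈ P | f y = a}) : ∀ y ∈ P, g y ∈ C := by
  intro y hy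
  have hpos : 0 < #{p ∈ P | f p = g y} := hg (g y) ▸ card_pos.2 ⟨y, mem_filter.2 ⟨hy, rfl⟩⟩
  obtain ⟨p, hp⟩ := card_pos.1 hpos
  obtain ⟨hpP, hpy⟩ := mem_filter.1 hp
  exact hpy ▸ hfC p hpP

end PowerDiagram

theorem stmt_1_general {n : ℕ} (P C : Finset (EuclideanSpace ℝ (Fin n)))
    (μ : EuclideanSpace ℝ (Fin n) → ℕ)
    (f : EuclideanSpace ℝ (Fin n) → EuclideanSpace ℝ (Fin n))
    (hfC : ∀ y ∈ P, f y ∈ C)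
    (hf : ∀ x ∈ C, (P.filter fun y => f y = x).card = μ x)
    (hmin : ∀ g : EuclideanSpace ℝ (Fin n) → EuclideanSpace ℝ (Fin n),
      (∀ y ∈ P, g y ∈ C) →
      (∀ x ∈ C, (P.filter fun y => g y = x).card = μ x) →
      ∑ y ∈ P, ‖y - f y‖ ^ 2 ≤ ∑ y ∈ P, ‖y - g y‖ ^ 2) :
    ∃ w : EuclideanSpace ℝ (Fin n) → ℝ,
      ∀ y ∈ P, ∀ x ∈ C, ‖y - f y‖ ^ 2 - w (f y) ≤ ‖y - x‖ ^ 2 - w x := by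
  have hopt : PowerDiagram.IsFiberOptimal P f fun y x => ‖y - x‖ ^ 2 := fun g hg =>
    hmin g (PowerDiagram.mapsTo_of_card_filter_eq hfC hg) fun x hx => by
      -- the filters here and in `IsFiberOptimal` carry different `Decidable` instances
      rw [← hf x hx]; convert hg x
  obtain ⟨w, hw⟩ := hopt.exists_weights
  exact ⟨w, fun y hy x _ => hw y hy x⟩

/-- If an assignment `f` has minimum cost (sum of squared Euclidean distances) among
all assignments with fiber sizes `μ`, then there exist weights `w` such that `f` is
consistent with the power diagram of `(C, w)`. -/
theorem stmt_1 {n : ℕ} (P C : Finset (EuclideanSpace ℝ (Fin n)))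
    (μ : EuclideanSpace ℝ (Fin n) → ℕ) (hμ : ∑ x ∈ C, μ x = P.card)
    (hex : ∃ f₀ : EuclideanSpace ℝ (Fin n) → EuclideanSpace ℝ (Fin n),
      (∀ y ∈ P, f₀ y ∈ C) ∧ ∀ x ∈ C, (P.filter fun y => f₀ y = x).card = μ x)
    (f : EuclideanSpace ℝ (Fin n) → EuclideanSpace ℝ (Fin n))
    (hfC : ∀ y ∈ P, f y ∈ C)
    (hf : ∀ x ∈ C, (P.filter fun y => f y = x).card = μ x)
    (hmin : ∀ g : EuclideanSpace ℝ (Fin n) → EuclideanSpace ℝ (Fin n),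
      (∀ y ∈ P, g y ∈ C) →
      (∀ x ∈ C, (P.filter fun y => g y = x).card = μ x) →
      ∑ y ∈ P, ‖y - f y‖ ^ 2 ≤ ∑ y ∈ P, ‖y - g y‖ ^ 2) :
    ∃ w : EuclideanSpace ℝ (Fin n) → ℝ,
      ∀ y ∈ P, ∀ x ∈ C, ‖y - f y‖ ^ 2 - w (f y) ≤ ‖y - x‖ ^ 2 - w x :=
  stmt_1_general P C μ f hfC hf hmin
end

section
/- Let P and C be finite sets, let c : P × C → ℝ be an arbitrary cost function, and let μ : C → ℕ be target fiber sizes with ∑_{x∈C} μ_x = |P|, where at least one assignment with fiber sizes μ exists. An assignment f : P → C with fiber sizes μ minimizes ∑_{y∈P} c(y, f(y)) among all assignments with fiber sizes μ if and only if there exist weights w : C → ℝ such that for every y ∈ P and every x ∈ C, c(y, f(y)) − w_{f(y)} ≤ c(y, x) − w_x. -/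
/-!
Give the centers the edge weights `a u v = min_{f y = u} (c y v - c y u)`, the cheapest
marginal cost of moving one resident of `u` to `v`. Rotating residents along a simple cycle of
centers is a permutation of `P`, so optimality of `f` makes every simple cycle of `a`
nonnegative. Without negative cycles, shortest simple path lengths `w` are a potential:
`w v ≤ w u + a u v`, which is the power-diagram inequality. Conversely, summing that inequality
over residents gives optimality, since `∑ y, w (g y) = ∑ x, μ x • w x` for every assignment `g`
with fiber sizes `μ`.
-/

open Finset

namespace List

theorem map_formPerm {α : Type*} [DecidableEq α] {l : List α} (hl : l.Nodup) :
    l.map l.formPerm = l.rotate 1 :=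
  ext_getElem (by simp) fun i h _ => by
    simp only [getElem_map, getElem_rotate, formPerm_apply_getElem l hl i (by simpa using h)]

theorem formPerm_map_apply {α β : Type*} [DecidableEq α] [DecidableEq β] {l : List α}
    (hl : l.Nodup) {g : α → β} (hg : Set.InjOn g {x | x ∈ l}) {x : α} (hx : x ∈ l) :
    (l.map g).formPerm (g x) = g (l.formPerm x) := by
  have hgl : (l.map g).Nodup := hl.map_on fun x hx y hy => hg hx hy
  have h : l.map ((l.map g).formPerm ∘ g) = l.map (g ∘ l.formPerm) := by
    rw [← map_map, map_formPerm hgl, ← map_map, map_formPerm hl, map_rotate]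
  exact map_inj_left.mp h x hx

end List

section Paths

variable {C : Type*} (a : C → C → ℝ)

def pathWeight : List C → ℝ
  | [] => 0
  | [_] => 0
  | u :: v :: t => a u v + pathWeight (v :: t)

theorem pathWeight_append_singleton : ∀ (l : List C) (hl : l ≠ []) (v : C),
    pathWeight a (l ++ [v]) = pathWeight a l + a (l.getLast hl) v
  | [u], _, v => by simp [pathWeight]
  | u :: x :: t, _, v => by
    rw [List.cons_append, List.cons_append, pathWeight, ← List.cons_append,
      pathWeight_append_singleton (x :: t) (List.cons_ne_nil _ _) v, List.getLast_cons_cons,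
      pathWeight, add_assoc]

theorem pathWeight_append_cons : ∀ (s : List C) (u : C) (t : List C),
    pathWeight a (s ++ u :: t) = pathWeight a (s ++ [u]) + pathWeight a (u :: t)
  | [], u, t => by simp [pathWeight]
  | [x], u, t => by simp [pathWeight]
  | x :: y :: s, u, t => by
    have ih := pathWeight_append_cons (y :: s) u t
    simp only [List.cons_append] at ih ⊢
    rw [pathWeight, pathWeight, ih, add_assoc]

theorem pathWeight_append_singleton_eq_sum_zipWith : ∀ (l : List C) (v : C),
    pathWeight a (l ++ [v]) = (List.zipWith a l (l.tail ++ [v])).sum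
  | [], v => rfl
  | [u], v => by simp [pathWeight]
  | u :: x :: t, v => by
    rw [List.cons_append, List.cons_append, pathWeight, ← List.cons_append,
      pathWeight_append_singleton_eq_sum_zipWith (x :: t) v]
    simp

variable [DecidableEq C]

def cycleWeight (l : List C) : ℝ :=
  (l.map fun u => a u (l.formPerm u)).sum

theorem pathWeight_cons_append_singleton {v : C} {t : List C}
    (h : (v :: t).Nodup) : pathWeight a (v :: t ++ [v]) = cycleWeight a (v :: t) := by
  have hrot : t ++ [v] = (v :: t).map (v :: t).formPerm := by
    rw [List.map_formPerm h, List.rotate_cons_succ, List.rotate_zero]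
  rw [pathWeight_append_singleton_eq_sum_zipWith, List.tail_cons, hrot, List.zipWith_map_right,
    List.zipWith_self, cycleWeight]

variable {a} {S : Set C}

theorem le_pathWeight_append_singleton
    (hcyc : ∀ l : List C, l.Nodup → (∀ u ∈ l, u ∈ S) → 0 ≤ cycleWeight a l) {w : C → ℝ}
    (hw : ∀ v s, (s ++ [v]).Nodup → (∀ x ∈ s, x ∈ S) → w v ≤ pathWeight a (s ++ [v]))
    {m : List C} (hm : m.Nodup) (hmS : ∀ x ∈ m, x ∈ S) (v : C) :
    w v ≤ pathWeight a (m ++ [v]) := by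
  by_cases hv : v ∈ m
  · obtain ⟨s, t, rfl⟩ := List.append_of_mem hv
    have hvt : (v :: t).Nodup := hm.sublist (List.sublist_append_right s (v :: t))
    have hsv : (s ++ [v]).Nodup :=
      hm.sublist (List.Sublist.append_left ((List.nil_sublist t).cons_cons v) s)
    have hcycle := hcyc (v :: t) hvt fun x hx => hmS x (by simp [hx])
    rw [← pathWeight_cons_append_singleton a hvt] at hcycle
    rw [List.append_assoc, List.cons_append, pathWeight_append_cons, ← List.cons_append]
    linarith [hw v s hsv fun x hx => hmS x (by simp [hx])]
  · exact hw v m (List.nodup_append.mpr ⟨hm, List.nodup_singleton v, fun x hx y hy => by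
      rintro rfl; exact hv (List.mem_singleton.mp hy ▸ hx)⟩) hmS

theorem exists_potential_of_cycleWeight_nonneg [Fintype C]
    (hcyc : ∀ l : List C, l.Nodup → (∀ u ∈ l, u ∈ S) → 0 ≤ cycleWeight a l) :
    ∃ w : C → ℝ, ∀ u ∈ S, ∀ v, w v ≤ w u + a u v := by
  -- `w v` is the weight of a shortest simple path ending at `v` whose earlier vertices lie in `S`
  let paths (v : C) : Set (List C) := {s | (s ++ [v]).Nodup ∧ ∀ x ∈ s, x ∈ S}
  have hfin (v : C) : (paths v).Finite :=
    (List.finite_length_le C (Fintype.card C)).subset fun s hs =>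
      le_trans (by simp) hs.1.length_le_card
  choose s hs hmin using fun v =>
    (paths v).exists_min_image (fun s => pathWeight a (s ++ [v])) (hfin v) ⟨[], by simp [paths]⟩
  refine ⟨fun v => pathWeight a (s v ++ [v]), fun u hu v => ?_⟩
  have hm : ∀ x ∈ s u ++ [u], x ∈ S := by
    simpa [or_imp, forall_and, hu] using (hs u).2
  have key :=
    le_pathWeight_append_singleton hcyc (fun v s hs hsS => hmin v s ⟨hs, hsS⟩) (hs u).1 hm v
  rwa [pathWeight_append_singleton a (s u ++ [u]) (by simp) v, List.getLast_append_singleton] at key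

end Paths

section Assignment

variable {P C : Type*} [Fintype P] [DecidableEq C]

theorem card_filter_comp_perm_eq (f : P → C) (σ : Equiv.Perm P) (x : C) :
    #{y | f (σ y) = x} = #{y | f y = x} :=
  card_equiv σ fun y => by simp

theorem sum_comp_eq_of_card_filter_eq [Fintype C] {M : Type*} [AddCommMonoid M] {f g : P → C}
    (hfg : ∀ x, #{y | f y = x} = #{y | g y = x}) (w : C → M) :
    ∑ y, w (f y) = ∑ y, w (g y) := by
  have h (f : P → C) : ∑ y, w (f y) = ∑ x, #{y | f y = x} • w x := by
    rw [← sum_fiberwise univ f]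
    exact sum_congr rfl fun x _ => sum_eq_card_nsmul fun y hy => by rw [(mem_filter.mp hy).2]
  simp only [h, hfg]

theorem sum_le_sum_of_forall_sub_le [Fintype C] (c : P → C → ℝ) {f g : P → C}
    (hfg : ∀ x, #{y | f y = x} = #{y | g y = x}) {w : C → ℝ}
    (hw : ∀ y x, c y (f y) - w (f y) ≤ c y x - w x) :
    ∑ y, c y (f y) ≤ ∑ y, c y (g y) := by
  have h := sum_le_sum fun y (_ : y ∈ univ) => hw y (g y)
  rw [sum_sub_distrib, sum_sub_distrib, sum_comp_eq_of_card_filter_eq hfg] at h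
  linarith

variable (c : P → C → ℝ) (f : P → C)

-- junk value `0` when `u` has no residents
noncomputable def minMoveCost (u v : C) : ℝ :=
  if h : ({y | f y = u} : Finset P).Nonempty then
    ({y | f y = u} : Finset P).inf' h fun y => c y v - c y u
  else 0

theorem minMoveCost_le (y : P) (v : C) : minMoveCost c f (f y) v ≤ c y v - c y (f y) := by
  have hy : y ∈ ({z | f z = f y} : Finset P) := by simp
  rw [minMoveCost, dif_pos ⟨y, hy⟩]
  exact inf'_le _ hy

theorem exists_eq_minMoveCost {u : C} (hu : u ∈ Set.range f) (v : C) :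
    ∃ y, f y = u ∧ c y v - c y u = minMoveCost c f u v := by
  obtain ⟨y₀, rfl⟩ := hu
  have hne : ({y | f y = f y₀} : Finset P).Nonempty := ⟨y₀, by simp⟩
  obtain ⟨y, hy, hmin⟩ := exists_mem_eq_inf' hne fun y => c y v - c y (f y₀)
  rw [minMoveCost, dif_pos hne, hmin]
  exact ⟨y, (mem_filter.mp hy).2, rfl⟩

theorem cycleWeight_minMoveCost_nonneg
    (hopt : ∀ σ : Equiv.Perm P, ∑ y, c y (f y) ≤ ∑ y, c y (f (σ y)))
    {l : List C} (hl : l.Nodup) (hlf : ∀ u ∈ l, u ∈ Set.range f) :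
    0 ≤ cycleWeight (minMoveCost c f) l := by
  classical
  rcases isEmpty_or_nonempty P with hP | hP
  · rw [List.eq_nil_iff_forall_not_mem.mpr fun u hu => hP.elim (hlf u hu).choose]
    simp [cycleWeight]
  -- move a cheapest resident of each `u ∈ l` to the next center of the cycle
  choose! Y hYf hYc using fun u (hu : u ∈ l) =>
    exists_eq_minMoveCost c f (hlf u hu) (l.formPerm u)
  have hYinj : Set.InjOn Y {u | u ∈ l} := fun u hu v hv h => by rw [← hYf u hu, ← hYf v hv, h]
  set ys := l.map Y
  have hys : ys.Nodup := hl.map_on fun u hu v hv => (hYinj hu hv ·)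
  set σ := ys.formPerm
  have key : ∑ y, (c y (f (σ y)) - c y (f y)) = cycleWeight (minMoveCost c f) l :=
    calc ∑ y, (c y (f (σ y)) - c y (f y))
        = ∑ y ∈ ys.toFinset, (c y (f (σ y)) - c y (f y)) :=
          (sum_subset (subset_univ _) fun y _ hy => by
            rw [List.formPerm_apply_of_notMem (by simpa using hy), sub_self]).symm
      _ = (ys.map fun y => c y (f (σ y)) - c y (f y)).sum := List.sum_toFinset _ hys
      _ = cycleWeight (minMoveCost c f) l := by
          rw [cycleWeight, List.map_map]
          refine congrArg List.sum (List.map_congr_left fun u hu => ?_)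
          simp only [Function.comp_apply, σ, ys, List.formPerm_map_apply hl hYinj hu,
            hYf _ (List.formPerm_apply_mem_of_mem hu), hYf u hu, hYc u hu]
  rw [← key, sum_sub_distrib, sub_nonneg]
  exact hopt σ

end Assignment

theorem stmt_2_general {P C : Type*} [Fintype P] [Fintype C] [DecidableEq C]
    (c : P → C → ℝ) (μ : C → ℕ)
    (f : P → C) (hf : ∀ x, (Finset.univ.filter fun y => f y = x).card = μ x) :
    (∀ g : P → C, (∀ x, (Finset.univ.filter fun y => g y = x).card = μ x) →
        ∑ y, c y (f y) ≤ ∑ y, c y (g y)) ↔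
      ∃ w : C → ℝ, ∀ y x, c y (f y) - w (f y) ≤ c y x - w x := by
  constructor
  · intro hopt
    have hperm (σ : Equiv.Perm P) : ∑ y, c y (f y) ≤ ∑ y, c y (f (σ y)) :=
      hopt (f ∘ σ) fun x => (card_filter_comp_perm_eq f σ x).trans (hf x)
    obtain ⟨w, hw⟩ := exists_potential_of_cycleWeight_nonneg fun _ hl hlf =>
      cycleWeight_minMoveCost_nonneg c f hperm hl hlf
    exact ⟨w, fun y x => by linarith [hw (f y) ⟨y, rfl⟩ x, minMoveCost_le c f y x]⟩
  · rintro ⟨w, hw⟩ g hg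
    exact sum_le_sum_of_forall_sub_le c (fun x => (hf x).trans (hg x).symm) hw

/-- For an arbitrary cost function `c`, an assignment `f` with fiber sizes `μ` has
minimum cost among all assignments with fiber sizes `μ` if and only if there exist
weights `w` such that `f` is consistent with the corresponding power diagram. -/
theorem stmt_2 {P C : Type*} [Fintype P] [Fintype C] [DecidableEq C]
    (c : P → C → ℝ) (μ : C → ℕ) (hμ : ∑ x, μ x = Fintype.card P)
    (hex : ∃ f₀ : P → C, ∀ x, (Finset.univ.filter fun y => f₀ y = x).card = μ x)
    (f : P → C) (hf : ∀ x, (Finset.univ.filter fun y => f y = x).card = μ x) :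
    (∀ g : P → C, (∀ x, (Finset.univ.filter fun y => g y = x).card = μ x) →
        ∑ y, c y (f y) ≤ ∑ y, c y (g y)) ↔
      ∃ w : C → ℝ, ∀ y x, c y (f y) - w (f y) ≤ c y x - w x :=
  stmt_2_general c μ f hf
end

section
/- Let P be a finite set of points in Euclidean space ℝ^n, let k ≥ 1, and let μ be target fiber sizes summing to |P|. Consider one iteration of the capacitated Lloyd's method: given centers C (a k-tuple of points of ℝ^n) and a minimum-cost assignment f : P → C with fiber sizes μ in which every fiber is nonempty, let C' be the k-tuple obtained by moving each center x to the centroid of f⁻¹(x), and let f' be a minimum-cost assignment with fiber sizes μ to the centers C'. Then ∑_{y∈P} ‖y − f'(y)‖² ≤ ∑_{y∈P} ‖y − f(y)‖², and the inequality is strict whenever C' ≠ C. -/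
open Finset RealInnerProductSpace

lemma centroid_split {n : ℕ} {P : Type*} (pos : P → EuclideanSpace ℝ (Fin n))
    (s : Finset P) (hs : s.Nonempty) (c : EuclideanSpace ℝ (Fin n)) :
    ∑ y ∈ s, ‖pos y - c‖ ^ 2 =
      (∑ y ∈ s, ‖pos y - (s.card : ℝ)⁻¹ • ∑ y ∈ s, pos y‖ ^ 2) +
        (s.card : ℝ) * ‖(s.card : ℝ)⁻¹ • (∑ y ∈ s, pos y) - c‖ ^ 2 := by
  set m : EuclideanSpace ℝ (Fin n) := (s.card : ℝ)⁻¹ • ∑ y ∈ s, pos y with hm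
  have hcard : (s.card : ℝ) ≠ 0 := by
    exact_mod_cast (Finset.card_pos.mpr hs).ne'
  have hzero : ∑ y ∈ s, (pos y - m) = 0 := by
    rw [Finset.sum_sub_distrib, Finset.sum_const, ← Nat.cast_smul_eq_nsmul ℝ, hm,
      smul_smul, mul_inv_cancel₀ hcard, one_smul, sub_self]
  have key : ∀ y, ‖pos y - c‖ ^ 2 =
      ‖pos y - m‖ ^ 2 + (2 * ⟪pos y - m, m - c⟫ + ‖m - c‖ ^ 2) := by
    intro y
    have h : pos y - c = (pos y - m) + (m - c) := by abel
    rw [h, norm_add_sq_real]; ring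
  simp_rw [key]
  rw [Finset.sum_add_distrib, Finset.sum_add_distrib, ← Finset.mul_sum,
    ← sum_inner, hzero, inner_zero_left, Finset.sum_const]
  ring

/-- One iteration of the capacitated Lloyd's method does not increase the cost:
if `f` is a minimum-cost assignment with fiber sizes `μ` to centers `ctr` (all fibers
nonempty), `ctr'` moves each center to the centroid of its fiber, and `f'` is a
minimum-cost assignment with fiber sizes `μ` to the centers `ctr'`, then the new cost
is at most the old cost, strictly smaller whenever `ctr' ≠ ctr`. -/
theorem stmt_7 {n k : ℕ} (hk : 1 ≤ k) {P : Type*} [Fintype P]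
    (pos : P → EuclideanSpace ℝ (Fin n))
    (μ : Fin k → ℕ) (hμ : ∑ x, μ x = Fintype.card P)
    (ctr : Fin k → EuclideanSpace ℝ (Fin n)) (f : P → Fin k)
    (hf : ∀ x, (Finset.univ.filter fun y => f y = x).card = μ x)
    (hfne : ∀ x, (Finset.univ.filter fun y => f y = x).Nonempty)
    (hfmin : ∀ g : P → Fin k,
      (∀ x, (Finset.univ.filter fun y => g y = x).card = μ x) →
      ∑ y, ‖pos y - ctr (f y)‖ ^ 2 ≤ ∑ y, ‖pos y - ctr (g y)‖ ^ 2)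
    (ctr' : Fin k → EuclideanSpace ℝ (Fin n))
    (hctr' : ∀ x, ctr' x = ((Finset.univ.filter fun y => f y = x).card : ℝ)⁻¹ •
      ∑ y ∈ Finset.univ.filter fun y => f y = x, pos y)
    (f' : P → Fin k)
    (hf' : ∀ x, (Finset.univ.filter fun y => f' y = x).card = μ x)
    (hf'min : ∀ g : P → Fin k,
      (∀ x, (Finset.univ.filter fun y => g y = x).card = μ x) →
      ∑ y, ‖pos y - ctr' (f' y)‖ ^ 2 ≤ ∑ y, ‖pos y - ctr' (g y)‖ ^ 2) :
    ∑ y, ‖pos y - ctr' (f' y)‖ ^ 2 ≤ ∑ y, ‖pos y - ctr (f y)‖ ^ 2 ∧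
    (ctr' ≠ ctr → ∑ y, ‖pos y - ctr' (f' y)‖ ^ 2 < ∑ y, ‖pos y - ctr (f y)‖ ^ 2) := by
  -- fiberwise decomposition for any centers g
  have fib : ∀ g : Fin k → EuclideanSpace ℝ (Fin n),
      ∑ y, ‖pos y - g (f y)‖ ^ 2 =
        ∑ x, ∑ y ∈ Finset.univ.filter fun y => f y = x, ‖pos y - g x‖ ^ 2 := by
    intro g
    rw [← Finset.sum_fiberwise_of_maps_to (g := f) (fun y _ => Finset.mem_univ (f y))]
    refine Finset.sum_congr rfl fun x _ => Finset.sum_congr rfl fun y hy => ?_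
    rw [(Finset.mem_filter.mp hy).2]
  -- old cost = new-centers cost with old assignment + correction term
  have split : ∑ y, ‖pos y - ctr (f y)‖ ^ 2 =
      (∑ y, ‖pos y - ctr' (f y)‖ ^ 2) +
        ∑ x, (μ x : ℝ) * ‖ctr' x - ctr x‖ ^ 2 := by
    rw [fib ctr, fib ctr', ← Finset.sum_add_distrib]
    refine Finset.sum_congr rfl fun x _ => ?_
    have := centroid_split pos (Finset.univ.filter fun y => f y = x) (hfne x) (ctr x)
    rw [this, ← hctr', hf x]
  have hΔ : 0 ≤ ∑ x, (μ x : ℝ) * ‖ctr' x - ctr x‖ ^ 2 :=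
    Finset.sum_nonneg fun x _ => mul_nonneg (Nat.cast_nonneg _) (sq_nonneg _)
  have h1 : ∑ y, ‖pos y - ctr' (f' y)‖ ^ 2 ≤ ∑ y, ‖pos y - ctr' (f y)‖ ^ 2 :=
    hf'min f hf
  constructor
  · linarith
  · intro hne
    obtain ⟨x0, hx0⟩ := Function.ne_iff.mp hne
    have hμpos : 0 < (μ x0 : ℝ) := by
      have := (hfne x0).card_pos
      rw [hf x0] at this
      exact_mod_cast this
    have hterm : 0 < (μ x0 : ℝ) * ‖ctr' x0 - ctr x0‖ ^ 2 := by
      exact mul_pos hμpos (pow_pos (norm_pos_iff.mpr (sub_ne_zero.mpr hx0)) 2)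
    have hΔ' : 0 < ∑ x, (μ x : ℝ) * ‖ctr' x - ctr x‖ ^ 2 :=
      Finset.sum_pos' (fun x _ => mul_nonneg (Nat.cast_nonneg _) (sq_nonneg _))
        ⟨x0, Finset.mem_univ _, hterm⟩
    linarith
end

section
/- There exist three residents X, Y, Z and three centers A, B, C in the Euclidean plane ℝ², and two bijections M', M* from {X, Y, Z} to {A, B, C}, such that: (i) the cost of M* is strictly less than the cost of M', where the cost of a bijection g is ∑_{p ∈ {X,Y,Z}} ‖p − g(p)‖²; and (ii) every bijection obtained from M' by swapping the assigned centers of exactly two residents has cost strictly greater than the cost of M'. Hence a bijection that is locally optimal under pairwise swaps need not minimize the sum of squared distances. -/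
/-!
We use lattice points instead of the paper's perturbed hexagon, so that all squared distances
between residents and centers are integers: the matrix of squared distances is `sqDist`. On it
the identity assignment costs 42, the three transpositions of it cost 74, 46 and 44, and the
3-cycle `(finRotate 3).symm` costs only 40. Distinct rows and distinct columns of `sqDist`
show that the residents, and likewise the centers, are pairwise distinct.
-/

lemma EuclideanSpace.norm_sub_sq_fin_two (x y : EuclideanSpace ℝ (Fin 2)) :
    ‖x - y‖ ^ 2 = (x 0 - y 0) ^ 2 + (x 1 - y 1) ^ 2 := by
  rw [EuclideanSpace.norm_eq, Real.sq_sqrt (by positivity)]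
  simp [Fin.sum_univ_two, Real.norm_eq_abs, sq_abs]

def residents : Fin 3 → EuclideanSpace ℝ (Fin 2) := ![!₂[3, -2], !₂[0, 3], !₂[1, 3]]

def centers : Fin 3 → EuclideanSpace ℝ (Fin 2) := ![!₂[-1, -3], !₂[2, 2], !₂[3, -1]]

def sqDist : Matrix (Fin 3) (Fin 3) ℕ := !![17, 17, 1; 37, 5, 25; 40, 2, 20]

lemma norm_residents_sub_centers_sq (i j : Fin 3) :
    ‖residents i - centers j‖ ^ 2 = sqDist i j := by
  fin_cases i <;> fin_cases j <;>
    norm_num [EuclideanSpace.norm_sub_sq_fin_two, residents, centers, sqDist]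

lemma sqDist_rows_injective : Function.Injective fun i j => sqDist i j := by
  decide

lemma sqDist_cols_injective : Function.Injective fun j i => sqDist i j := by
  decide

lemma residents_injective : Function.Injective residents := by
  intro i i' h
  refine sqDist_rows_injective (funext fun j => ?_)
  exact_mod_cast (norm_residents_sub_centers_sq i j).symm.trans
    (h ▸ norm_residents_sub_centers_sq i' j)

lemma centers_injective : Function.Injective centers := by
  intro j j' h
  refine sqDist_cols_injective (funext fun i => ?_)
  exact_mod_cast (norm_residents_sub_centers_sq i j).symm.trans
    (h ▸ norm_residents_sub_centers_sq i j')

def cost (σ : Fin 3 → Fin 3) : ℕ := ∑ p, sqDist p (σ p)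

lemma sum_norm_residents_sub_centers_sq (σ : Fin 3 → Fin 3) :
    ∑ p, ‖residents p - centers (σ p)‖ ^ 2 = cost σ := by
  simp only [norm_residents_sub_centers_sq, cost, Nat.cast_sum]

lemma cost_finRotate_symm_lt_cost_id : cost (finRotate 3).symm < cost id := by
  decide

lemma cost_id_lt_cost_swap : ∀ i j : Fin 3, i ≠ j → cost id < cost (Equiv.swap i j) := by
  decide

/-- There are three residents and three centers in the plane and two bijective
assignments `M'` and `Mstar` such that `Mstar` has strictly smaller cost (sum of
squared distances) than `M'`, yet every bijection obtained from `M'` by swapping the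
assigned centers of exactly two residents has strictly larger cost than `M'`.
Hence swap-local optimality does not imply global optimality. -/
theorem stmt_8 :
    ∃ (r c : Fin 3 → EuclideanSpace ℝ (Fin 2)) (M' Mstar : Equiv.Perm (Fin 3)),
      Function.Injective r ∧ Function.Injective c ∧
      (∑ p, ‖r p - c (Mstar p)‖ ^ 2 < ∑ p, ‖r p - c (M' p)‖ ^ 2) ∧
      (∀ i j : Fin 3, i ≠ j →
        ∑ p, ‖r p - c (M' p)‖ ^ 2 < ∑ p, ‖r p - c (M' (Equiv.swap i j p))‖ ^ 2) := by
  refine ⟨residents, centers, 1, (finRotate 3).symm, residents_injective, centers_injective,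
    ?_, fun i j hij => ?_⟩
  · simp only [Equiv.Perm.one_apply, sum_norm_residents_sub_centers_sq]
    exact_mod_cast cost_finRotate_symm_lt_cost_id
  · simp only [Equiv.Perm.one_apply, sum_norm_residents_sub_centers_sq]
    exact_mod_cast cost_id_lt_cost_swap i j hij
end
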